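/- (De Leeuw–Stoop bound in one dimension with equal weights.) Let n ≥ 2 and let x : Fin n → ℝ. Set d_ij := |x_i − x_j| for i < j, let N := n(n−1)/2, and let d̄ := (1/N)·Σ_{i<j} d_ij. Then (1/N)·Σ_{i<j} (d_ij − d̄)² ≥ ((n−2)/(3n)) · (1/N)·Σ_{i<j} d_ij². Consequently, for any dissimilarities δ_ij ≥ 0, with equal weights w_ij = 1/N, σ₁(x) ≥ (1/3)·((n−2)/n)·σ₂(x) whenever η₂²(x) > 0. -/

import Mathlib

open scoped BigOperators

/-- Sum of `f i j` over all pairs `i < j`. -/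
noncomputable def pairSum (n : ℕ) (f : Fin n → Fin n → ℝ) : ℝ :=
  ∑ i : Fin n, ∑ j : Fin n, if i < j then f i j else 0

/-- Distance between coordinates `i` and `j` of a one-dimensional configuration. -/
noncomputable def dist1 {n : ℕ} (x : Fin n → ℝ) (i j : Fin n) : ℝ := |x i - x j|

/-- The number of pairs `N = n(n-1)/2` (as a real number). -/
noncomputable def npairs (n : ℕ) : ℝ := (n : ℝ) * ((n : ℝ) - 1) / 2

/-- Mean distance with equal weights `1/N`. -/
noncomputable def dbar1 {n : ℕ} (x : Fin n → ℝ) : ℝ :=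
  (1 / npairs n) * pairSum n (fun i j => dist1 x i j)

/-- `η₁²` with equal weights. -/
noncomputable def eta1sq1 {n : ℕ} (x : Fin n → ℝ) : ℝ :=
  (1 / npairs n) * pairSum n (fun i j => dist1 x i j ^ 2)

/-- `η₂²` with equal weights. -/
noncomputable def eta2sq1 {n : ℕ} (x : Fin n → ℝ) : ℝ :=
  (1 / npairs n) * pairSum n (fun i j => (dist1 x i j - dbar1 x) ^ 2)

/-- Raw stress with equal weights. -/
noncomputable def sigmaR1 {n : ℕ} (δ : Fin n → Fin n → ℝ) (x : Fin n → ℝ) : ℝ :=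
  (1 / npairs n) * pairSum n (fun i j => (δ i j - dist1 x i j) ^ 2)

/-- Kruskal's stress formula one with equal weights. -/
noncomputable def sigma1' {n : ℕ} (δ : Fin n → Fin n → ℝ) (x : Fin n → ℝ) : ℝ :=
  sigmaR1 δ x / eta1sq1 x

/-- Kruskal's stress formula two with equal weights. -/
noncomputable def sigma2' {n : ℕ} (δ : Fin n → Fin n → ℝ) (x : Fin n → ℝ) : ℝ :=
  sigmaR1 δ x / eta2sq1 x


/-!
Since `η₂² = η₁² - d̄²`, the first claim is the inequality
`(∑_{i<j} d_ij)² ≤ (n² - 1)/3 · ∑_{i<j} d_ij²`. Both sides are invariant under permuting the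
coordinates, so `x` may be taken sorted; then `∑_{i<j} d_ij = ∑_i (2i - (n - 1)) x_i`. These
coefficients sum to zero with squares summing to `n(n² - 1)/3`, so Cauchy–Schwarz against the
centred `x` gives the bound, because `n ∑_i (x_i - x̄)² = ∑_{i<j} d_ij²`. The stress bound is
then immediate from `σ₁ · η₁² = σ₂ · η₂²`.
-/

section PairSum

variable {n : ℕ}

lemma pairSum_congr {f g : Fin n → Fin n → ℝ} (h : ∀ i j, i < j → f i j = g i j) :
    pairSum n f = pairSum n g :=
  Finset.sum_congr rfl fun i _ => Finset.sum_congr rfl fun j _ => by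
    split_ifs with hij
    exacts [h i j hij, rfl]

lemma pairSum_add (f g : Fin n → Fin n → ℝ) :
    pairSum n (fun i j => f i j + g i j) = pairSum n f + pairSum n g := by
  simp only [pairSum, ← Finset.sum_add_distrib, ite_add_ite, add_zero]

lemma pairSum_sub (f g : Fin n → Fin n → ℝ) :
    pairSum n (fun i j => f i j - g i j) = pairSum n f - pairSum n g := by
  simp only [pairSum, ← Finset.sum_sub_distrib, ite_sub_ite, sub_zero]

lemma pairSum_mul_left (c : ℝ) (f : Fin n → Fin n → ℝ) :
    pairSum n (fun i j => c * f i j) = c * pairSum n f := by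
  simp only [pairSum, Finset.mul_sum, mul_ite, mul_zero]

lemma pairSum_nonneg {f : Fin n → Fin n → ℝ} (h : ∀ i j, i < j → 0 ≤ f i j) :
    0 ≤ pairSum n f :=
  Finset.sum_nonneg fun i _ => Finset.sum_nonneg fun j _ => by
    split_ifs with hij
    exacts [h i j hij, le_rfl]

lemma sum_sum_eq_two_mul_pairSum_add {f : Fin n → Fin n → ℝ} (hf : ∀ i j, f i j = f j i) :
    ∑ i, ∑ j, f i j = 2 * pairSum n f + ∑ i, f i i := by
  have hsplit : ∀ i j, f i j = (if i < j then f i j else 0) + (if j < i then f j i else 0) +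
      (if i = j then f i j else 0) := by
    intro i j
    rcases lt_trichotomy i j with h | rfl | h
    · simp [h, h.ne, h.not_gt]
    · simp
    · simp [h, h.ne', h.not_gt, hf i j]
  have hlower : ∑ i : Fin n, ∑ j : Fin n, (if j < i then f j i else 0) = pairSum n f :=
    Finset.sum_comm
  simp_rw [Finset.sum_congr rfl fun i _ => Finset.sum_congr rfl fun j _ => hsplit i j,
    Finset.sum_add_distrib, hlower, Finset.sum_ite_eq, Finset.mem_univ, if_true]
  rw [pairSum]
  ring

lemma pairSum_const (c : ℝ) : pairSum n (fun _ _ => c) = c * npairs n := by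
  have h := sum_sum_eq_two_mul_pairSum_add (n := n) (f := fun _ _ => c) fun _ _ => rfl
  simp only [Finset.sum_const, Finset.card_univ, Fintype.card_fin, nsmul_eq_mul] at h
  rw [npairs]
  linarith

lemma pairSum_comp_perm {f : Fin n → Fin n → ℝ} (hf : ∀ i j, f i j = f j i)
    (σ : Equiv.Perm (Fin n)) : pairSum n (fun i j => f (σ i) (σ j)) = pairSum n f := by
  have hσ := sum_sum_eq_two_mul_pairSum_add (f := fun i j => f (σ i) (σ j)) fun i j => hf _ _
  have h := sum_sum_eq_two_mul_pairSum_add hf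
  rw [Equiv.sum_comp σ (fun i => ∑ j, f i (σ j)), Equiv.sum_comp σ (fun i => f i i)] at hσ
  simp only [Equiv.sum_comp σ] at hσ
  linarith

end PairSum

/-- The coefficient of `y i` in `∑_{i<j} (y j - y i)`: `y i` is added once for each of the `i`
smaller indices and subtracted once for each of the `n - 1 - i` larger ones. -/
noncomputable def rankCoeff (n : ℕ) (i : Fin n) : ℝ := 2 * (i : ℕ) - (n - 1)

section RankCoeff

variable {n : ℕ}

lemma pairSum_sub_eq_sum_rankCoeff_mul (g : Fin n → ℝ) :
    pairSum n (fun i j => g j - g i) = ∑ i, rankCoeff n i * g i := by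
  have hupper : pairSum n (fun _ j => g j) = ∑ j : Fin n, ((j : ℕ) : ℝ) * g j := by
    rw [pairSum, Finset.sum_comm]
    simp [Finset.sum_ite, Finset.filter_gt_eq_Iio]
  have hlower : pairSum n (fun i _ => g i) = ∑ i : Fin n, ((n : ℝ) - 1 - (i : ℕ)) * g i := by
    simp only [pairSum, Finset.sum_ite, Finset.filter_lt_eq_Ioi, Finset.sum_const,
      Fin.card_Ioi, nsmul_eq_mul, mul_zero, add_zero]
    refine Finset.sum_congr rfl fun i _ => ?_
    have := i.isLt
    rw [Nat.cast_sub (by omega), Nat.cast_sub (by omega), Nat.cast_one]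
  rw [pairSum_sub, hupper, hlower, ← Finset.sum_sub_distrib]
  exact Finset.sum_congr rfl fun i _ => by rw [rankCoeff]; ring

lemma sum_fin_val_cast (n : ℕ) : ∑ i : Fin n, ((i : ℕ) : ℝ) = n * (n - 1) / 2 := by
  induction n with
  | zero => simp
  | succ n ih => rw [Fin.sum_univ_castSucc]; simp [ih]; ring

lemma sum_fin_val_cast_sq (n : ℕ) :
    ∑ i : Fin n, ((i : ℕ) : ℝ) ^ 2 = n * (n - 1) * (2 * n - 1) / 6 := by
  induction n with
  | zero => simp
  | succ n ih => rw [Fin.sum_univ_castSucc]; simp [ih]; ring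

lemma sum_rankCoeff (n : ℕ) : ∑ i, rankCoeff n i = 0 := by
  simp [rankCoeff, Finset.sum_sub_distrib, ← Finset.mul_sum, sum_fin_val_cast]
  ring

lemma sum_rankCoeff_sq (n : ℕ) : ∑ i, rankCoeff n i ^ 2 = n * ((n : ℝ) ^ 2 - 1) / 3 := by
  simp [rankCoeff, sub_sq, mul_pow, Finset.sum_add_distrib, Finset.sum_sub_distrib,
    ← Finset.mul_sum, ← Finset.sum_mul, sum_fin_val_cast, sum_fin_val_cast_sq]
  ring

end RankCoeff

lemma card_mul_sq_sum_mul_le_of_sum_eq_zero {ι : Type*} (s : Finset ι) (a y : ι → ℝ)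
    (ha : ∑ i ∈ s, a i = 0) :
    s.card * (∑ i ∈ s, a i * y i) ^ 2 ≤
      (∑ i ∈ s, a i ^ 2) * (s.card * ∑ i ∈ s, y i ^ 2 - (∑ i ∈ s, y i) ^ 2) := by
  obtain rfl | hs := s.eq_empty_or_nonempty
  · simp
  have hcard : (0 : ℝ) < s.card := by exact_mod_cast hs.card_pos
  set c := (∑ i ∈ s, y i) / s.card
  have hcentre : ∑ i ∈ s, a i * y i = ∑ i ∈ s, a i * (y i - c) := by
    simp [mul_sub, Finset.sum_sub_distrib, ← Finset.sum_mul, ha]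
  have hvar : s.card * ∑ i ∈ s, (y i - c) ^ 2 =
      s.card * ∑ i ∈ s, y i ^ 2 - (∑ i ∈ s, y i) ^ 2 := by
    simp [sub_sq, Finset.sum_add_distrib, Finset.sum_sub_distrib, ← Finset.mul_sum,
      ← Finset.sum_mul, c]
    field_simp
    ring
  rw [hcentre, ← hvar, mul_left_comm]
  exact mul_le_mul_of_nonneg_left (Finset.sum_mul_sq_le_sq_mul_sq s a _) hcard.le

section Dist1

variable {n : ℕ}

lemma pairSum_dist1_of_monotone {y : Fin n → ℝ} (hy : Monotone y) :
    pairSum n (fun i j => dist1 y i j) = ∑ i, rankCoeff n i * y i := by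
  rw [← pairSum_sub_eq_sum_rankCoeff_mul]
  exact pairSum_congr fun i j hij => by
    rw [dist1, abs_sub_comm, abs_of_nonneg (sub_nonneg.2 (hy hij.le))]

lemma pairSum_dist1_sq (y : Fin n → ℝ) :
    pairSum n (fun i j => dist1 y i j ^ 2) = n * ∑ i, y i ^ 2 - (∑ i, y i) ^ 2 := by
  simp only [dist1, sq_abs]
  have h := sum_sum_eq_two_mul_pairSum_add (f := fun i j => (y i - y j) ^ 2) fun i j => by ring
  have hexpand : ∑ i, ∑ j, (y i - y j) ^ 2 = 2 * (n * ∑ i, y i ^ 2 - (∑ i, y i) ^ 2) := by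
    simp [sub_sq, Finset.sum_add_distrib, Finset.sum_sub_distrib, ← Finset.mul_sum,
      ← Finset.sum_mul]
    ring
  simp only [sub_self, zero_pow two_ne_zero, Finset.sum_const_zero, add_zero] at h
  linarith

lemma sq_pairSum_dist1_le_of_monotone {y : Fin n → ℝ} (hy : Monotone y) :
    pairSum n (fun i j => dist1 y i j) ^ 2 ≤
      ((n : ℝ) ^ 2 - 1) / 3 * pairSum n (fun i j => dist1 y i j ^ 2) := by
  obtain rfl | hn := n.eq_zero_or_pos
  · simp [pairSum]
  have hn' : (0 : ℝ) < n := by exact_mod_cast hn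
  have hcs := card_mul_sq_sum_mul_le_of_sum_eq_zero Finset.univ (rankCoeff n) y
    (sum_rankCoeff n)
  simp only [Finset.card_univ, Fintype.card_fin, sum_rankCoeff_sq] at hcs
  rw [pairSum_dist1_of_monotone hy, pairSum_dist1_sq]
  nlinarith

lemma sq_pairSum_dist1_le (x : Fin n → ℝ) :
    pairSum n (fun i j => dist1 x i j) ^ 2 ≤
      ((n : ℝ) ^ 2 - 1) / 3 * pairSum n (fun i j => dist1 x i j ^ 2) := by
  have hsymm : ∀ i j, dist1 x i j = dist1 x j i := fun i j => abs_sub_comm _ _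
  rw [← pairSum_comp_perm hsymm (Tuple.sort x),
    ← pairSum_comp_perm (f := fun i j => dist1 x i j ^ 2) (fun i j => by rw [hsymm])
      (Tuple.sort x)]
  exact sq_pairSum_dist1_le_of_monotone (Tuple.monotone_sort x)

end Dist1

lemma npairs_pos {n : ℕ} (hn : 2 ≤ n) : 0 < npairs n := by
  have : (2 : ℝ) ≤ n := by exact_mod_cast hn
  unfold npairs
  nlinarith

section Eta

variable {n : ℕ} (x : Fin n → ℝ)

lemma eta2sq1_eq (hN : npairs n ≠ 0) : eta2sq1 x = eta1sq1 x - dbar1 x ^ 2 := by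
  have hexpand : pairSum n (fun i j => (dist1 x i j - dbar1 x) ^ 2) =
      pairSum n (fun i j => dist1 x i j ^ 2) - 2 * dbar1 x * pairSum n (fun i j => dist1 x i j)
        + dbar1 x ^ 2 * npairs n := by
    rw [← pairSum_mul_left, ← pairSum_const, ← pairSum_sub, ← pairSum_add]
    exact pairSum_congr fun i j _ => by ring
  rw [eta2sq1, hexpand, eta1sq1, dbar1]
  field_simp
  ring

lemma dbar1_sq_le (hn : 2 ≤ n) : dbar1 x ^ 2 ≤ 2 * (n + 1) / (3 * n) * eta1sq1 x := by
  have hn' : (2 : ℝ) ≤ n := by exact_mod_cast hn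
  rw [dbar1, eta1sq1]
  calc (1 / npairs n * pairSum n (fun i j => dist1 x i j)) ^ 2
      = pairSum n (fun i j => dist1 x i j) ^ 2 / npairs n ^ 2 := by ring
    _ ≤ ((n : ℝ) ^ 2 - 1) / 3 * pairSum n (fun i j => dist1 x i j ^ 2) / npairs n ^ 2 := by
      gcongr
      exact sq_pairSum_dist1_le x
    _ = 2 * (n + 1) / (3 * n) * (1 / npairs n * pairSum n (fun i j => dist1 x i j ^ 2)) := by
      have : (n : ℝ) - 1 ≠ 0 := by linarith
      unfold npairs
      field_simp
      ring

end Eta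

lemma mul_div_le_div_of_mul_le {a b c r : ℝ} (hr : 0 ≤ r) (ha : 0 < a) (hb : 0 < b)
    (h : c * a ≤ b) : c * (r / b) ≤ r / a := by
  rw [← mul_div_assoc, div_le_div_iff₀ hb ha]
  nlinarith

/-- De Leeuw–Stoop bound in one dimension with equal weights:
`η₂²(x) ≥ ((n-2)/(3n))·η₁²(x)`, and consequently
`σ₁(x) ≥ (1/3)·((n-2)/n)·σ₂(x)` whenever `η₂²(x) > 0`. -/
theorem deleeuw_stoop_bound
    {n : ℕ} (hn : 2 ≤ n) (x : Fin n → ℝ) :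
    (1 / npairs n) * pairSum n (fun i j => (dist1 x i j - dbar1 x) ^ 2) ≥
      (((n : ℝ) - 2) / (3 * (n : ℝ))) *
        ((1 / npairs n) * pairSum n (fun i j => dist1 x i j ^ 2)) ∧
    ∀ δ : Fin n → Fin n → ℝ, (∀ i j : Fin n, i < j → 0 ≤ δ i j) →
      0 < eta2sq1 x →
      sigma1' δ x ≥ (1 / 3) * (((n : ℝ) - 2) / (n : ℝ)) * sigma2' δ x := by
  have hn' : (0 : ℝ) < n := by positivity
  have heta : eta2sq1 x = eta1sq1 x - dbar1 x ^ 2 := eta2sq1_eq x (npairs_pos hn).ne'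
  have hbound : ((n : ℝ) - 2) / (3 * n) * eta1sq1 x ≤ eta2sq1 x := by
    have hcoeff : ((n : ℝ) - 2) / (3 * n) = 1 - 2 * (n + 1) / (3 * n) := by field_simp; ring
    rw [heta, hcoeff]
    linarith [dbar1_sq_le x hn]
  refine ⟨hbound, fun δ _ hpos => ?_⟩
  have hstress : 0 ≤ sigmaR1 δ x :=
    mul_nonneg (one_div_nonneg.2 (npairs_pos hn).le) (pairSum_nonneg fun _ _ _ => sq_nonneg _)
  have hcoeff : (1 / 3 : ℝ) * ((n - 2) / n) = (n - 2) / (3 * n) := by field_simp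
  rw [ge_iff_le, hcoeff]
  exact mul_div_le_div_of_mul_le hstress (by nlinarith [sq_nonneg (dbar1 x)]) hpos hbound
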